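/- arXiv:1302.3447 — 2 statements merged into one kernel-verified Lean document; each statement's English description precedes it below -/
import Mathlib

section
/- Let (Ω, F, P) be a probability space and let X_1, X_2, ... be i.i.d. Bernoulli(p) with p ∈ (0,1). Consider the multistage sampling scheme with stages ℓ = 1,...,s, sample sizes n_1 < ... < n_s satisfying n_1 ≥ 2ρ(1/ε - ρ) ln(1/(ζδ)) and n_s ≥ (1/(2ε²)) ln(1/(ζδ)), with stopping rule: stop at the first stage ℓ for which (|p̂_ℓ - 1/2| - ρε)² ≥ 1/4 + ε²n_ℓ/(2 ln(ζδ)), where p̂_ℓ = (∑_{i=1}^{n_ℓ} X_i)/n_ℓ. Let p̂ be the value of p̂_ℓ at stopping. If 0 < ζ ≤ (1/δ) exp( (ln(δ/2) + ln(1 - exp(-2ε²))) / (4ερ(1-ρε)) ), then Pr{|p̂ - p| < ε} ≥ 1 - δ for every p ∈ (0,1). -/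
/-!
By Hoeffding's inequality, at stage `ℓ` the estimate misses `p` by at least `ε` with probability
at most `2 exp (-2 n_ℓ ε²)`. The bound on `n_s` makes the right-hand side of the stopping rule
nonpositive at the last stage, so the procedure stops at some stage in `[1, s]`, and a union bound
over the stages applies. Strictly increasing sample sizes have `n_ℓ ≥ n_1 + ℓ - 1`, so the union
bound is at most the geometric sum `2 exp (-2 n_1 ε²) / (1 - exp (-2 ε²))`, and the conditions on
`n_1` and `ζ` are exactly what make this at most `δ`.
-/

open MeasureTheory ProbabilityTheory Real
open scoped NNReal ENNReal

section Bernoulli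

variable {Ω : Type*} [MeasurableSpace Ω] {P : Measure Ω}

lemma measureReal_abs_sum_range_ge_le_of_iIndepFun {X : ℕ → Ω → ℝ} (h_indep : iIndepFun X P)
    {c : ℝ≥0} {m : ℕ} (h_subG : ∀ i < m, HasSubgaussianMGF (X i) c P) {t : ℝ} (ht : 0 ≤ t) :
    P.real {ω | t ≤ |∑ i ∈ Finset.range m, X i ω|} ≤ 2 * exp (-t ^ 2 / (2 * m * c)) := by
  have h_indep_neg : iIndepFun (fun i => -X i) P :=
    h_indep.comp (fun _ => Neg.neg) fun _ => measurable_neg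
  have hsplit : {ω | t ≤ |∑ i ∈ Finset.range m, X i ω|} =
      {ω | t ≤ ∑ i ∈ Finset.range m, X i ω} ∪ {ω | t ≤ ∑ i ∈ Finset.range m, (-X i) ω} := by
    ext ω
    simp [le_abs]
  calc P.real {ω | t ≤ |∑ i ∈ Finset.range m, X i ω|}
      ≤ P.real {ω | t ≤ ∑ i ∈ Finset.range m, X i ω}
        + P.real {ω | t ≤ ∑ i ∈ Finset.range m, (-X i) ω} := hsplit ▸ measureReal_union_le _ _
    _ ≤ exp (-t ^ 2 / (2 * m * c)) + exp (-t ^ 2 / (2 * m * c)) := by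
      gcongr
      · exact HasSubgaussianMGF.measure_sum_range_ge_le_of_iIndepFun h_indep h_subG ht
      · exact HasSubgaussianMGF.measure_sum_range_ge_le_of_iIndepFun h_indep_neg
          (fun i hi => (h_subG i hi).neg) ht
    _ = 2 * exp (-t ^ 2 / (2 * m * c)) := by ring

variable [IsProbabilityMeasure P]

lemma ofReal_one_sub_le_of_measure_compl_le {E : Set Ω} {δ : ℝ} (hδ : 0 ≤ δ)
    (h : P Eᶜ ≤ ENNReal.ofReal δ) :
    ENNReal.ofReal (1 - δ) ≤ P E := by
  have hcover : 1 ≤ P E + P Eᶜ := by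
    rw [← measure_univ (μ := P), ← Set.union_compl_self E]
    exact measure_union_le _ _
  rw [ENNReal.ofReal_sub 1 hδ, ENNReal.ofReal_one, tsub_le_iff_right]
  exact hcover.trans (by gcongr)

variable {Y : Ω → ℝ} {p : ℝ}

lemma ae_eq_zero_or_eq_one_of_bernoulli (hp0 : 0 ≤ p) (hp1 : p ≤ 1) (hY : Measurable Y)
    (h1 : P {ω | Y ω = 1} = ENNReal.ofReal p) (h0 : P {ω | Y ω = 0} = ENNReal.ofReal (1 - p)) :
    ∀ᵐ ω ∂P, Y ω = 0 ∨ Y ω = 1 := by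
  have hdisj : Disjoint {ω | Y ω = 0} {ω | Y ω = 1} :=
    Set.disjoint_left.2 fun ω h0 h1 => by simp_all
  have hmeas : ∀ c : ℝ, MeasurableSet {ω | Y ω = c} := fun c =>
    measurableSet_eq_fun hY measurable_const
  have hunion : P ({ω | Y ω = 0} ∪ {ω | Y ω = 1}) = 1 := by
    rw [measure_union hdisj (hmeas 1), h0, h1, ← ENNReal.ofReal_add (by linarith) hp0,
      sub_add_cancel, ENNReal.ofReal_one]
  exact (ae_iff_measure_eq ((hmeas 0).union (hmeas 1)).nullMeasurableSet).2
    (hunion.trans measure_univ.symm)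

lemma integral_eq_of_bernoulli (hp0 : 0 ≤ p) (hp1 : p ≤ 1) (hY : Measurable Y)
    (h1 : P {ω | Y ω = 1} = ENNReal.ofReal p) (h0 : P {ω | Y ω = 0} = ENNReal.ofReal (1 - p)) :
    P[Y] = p := by
  have hY_eq : Y =ᵐ[P] {ω | Y ω = 1}.indicator 1 := by
    filter_upwards [ae_eq_zero_or_eq_one_of_bernoulli hp0 hp1 hY h1 h0] with ω hω
    rcases hω with hω | hω <;> simp [Set.indicator, hω]
  rw [integral_congr_ae hY_eq, integral_indicator_one (measurableSet_eq_fun hY measurable_const),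
    measureReal_def, h1, ENNReal.toReal_ofReal hp0]

lemma hasSubgaussianMGF_sub_of_bernoulli (hp0 : 0 ≤ p) (hp1 : p ≤ 1) (hY : Measurable Y)
    (h1 : P {ω | Y ω = 1} = ENNReal.ofReal p) (h0 : P {ω | Y ω = 0} = ENNReal.ofReal (1 - p)) :
    HasSubgaussianMGF (fun ω => Y ω - p) (1 / 4) P := by
  have hIcc : ∀ᵐ ω ∂P, Y ω ∈ Set.Icc (0 : ℝ) 1 := by
    filter_upwards [ae_eq_zero_or_eq_one_of_bernoulli hp0 hp1 hY h1 h0] with ω hω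
    rcases hω with hω | hω <;> simp [hω]
  have h := hasSubgaussianMGF_of_mem_Icc hY.aemeasurable hIcc
  rw [integral_eq_of_bernoulli hp0 hp1 hY h1 h0] at h
  convert h
  ext
  norm_num

lemma measure_le_abs_sampleMean_sub_le_of_bernoulli (hp0 : 0 ≤ p) (hp1 : p ≤ 1)
    {X : ℕ → Ω → ℝ} (hmeas : ∀ i, Measurable (X i)) (hind : iIndepFun X P)
    (hber : ∀ i, P {ω | X i ω = 1} = ENNReal.ofReal p ∧
                 P {ω | X i ω = 0} = ENNReal.ofReal (1 - p))
    {ε : ℝ} (hε : 0 ≤ ε) (m : ℕ) :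
    P {ω | ε ≤ |(∑ i ∈ Finset.range m, X i ω) / m - p|} ≤
      ENNReal.ofReal (2 * exp (-2 * ε ^ 2 * m)) := by
  rcases m.eq_zero_or_pos with rfl | hm
  · calc _ ≤ 1 := prob_le_one
      _ ≤ ENNReal.ofReal (2 * exp (-2 * ε ^ 2 * (0 : ℕ))) := by norm_num
  have hm' : (0 : ℝ) < m := Nat.cast_pos.2 hm
  have hcentered : ∀ i, HasSubgaussianMGF (fun ω => X i ω - p) (1 / 4) P := fun i =>
    hasSubgaussianMGF_sub_of_bernoulli hp0 hp1 (hmeas i) (hber i).1 (hber i).2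
  have hind' : iIndepFun (fun i ω => X i ω - p) P :=
    hind.comp (fun _ x => x - p) fun _ => measurable_sub_const p
  have hset : {ω | ε ≤ |(∑ i ∈ Finset.range m, X i ω) / m - p|} =
      {ω | m * ε ≤ |∑ i ∈ Finset.range m, (X i ω - p)|} := by
    ext ω
    have : ∑ i ∈ Finset.range m, (X i ω - p) = m * ((∑ i ∈ Finset.range m, X i ω) / m - p) := by
      rw [Finset.sum_sub_distrib, Finset.sum_const, Finset.card_range, nsmul_eq_mul]
      field_simp
    simp only [Set.mem_ofPred_eq, this, abs_mul, Nat.abs_cast, mul_le_mul_iff_right₀ hm']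
  have h := measureReal_abs_sum_range_ge_le_of_iIndepFun hind' (m := m) (fun i _ => hcentered i)
    (mul_nonneg hm'.le hε)
  rw [hset, ← ofReal_measureReal]
  refine ENNReal.ofReal_le_ofReal (h.trans_eq ?_)
  congr 2
  push_cast
  field_simp
  ring

end Bernoulli

lemma StrictMonoOn.add_le_add_one_of_mem_Icc {n : ℕ → ℕ} {s : ℕ} (hn : StrictMonoOn n (Set.Icc 1 s))
    {ℓ : ℕ} (hℓ : ℓ ∈ Set.Icc 1 s) : n 1 + ℓ ≤ n ℓ + 1 := by
  obtain ⟨h1ℓ, hℓs⟩ := hℓ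
  induction ℓ, h1ℓ using Nat.le_induction with
  | base => rfl
  | succ ℓ h1ℓ ih =>
    have := hn ⟨h1ℓ, by omega⟩ ⟨by omega, hℓs⟩ (Nat.lt_succ_self ℓ)
    have := ih (by omega)
    omega

lemma sum_exp_mul_le_of_strictMonoOn {n : ℕ → ℕ} {s : ℕ} (hn : StrictMonoOn n (Set.Icc 1 s))
    {a : ℝ} (ha : a < 0) :
    ∑ ℓ ∈ Finset.Icc 1 s, exp (a * n ℓ) ≤ exp (a * n 1) / (1 - exp a) := by
  have hr : exp a < 1 := Real.exp_lt_one_iff.2 ha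
  have hterm : ∀ ℓ ∈ Finset.Icc 1 s, exp (a * n ℓ) ≤ exp (a * (n 1 - 1)) * exp a ^ ℓ := by
    intro ℓ hℓ
    have hle : (n 1 : ℝ) + ℓ ≤ n ℓ + 1 := by
      exact_mod_cast hn.add_le_add_one_of_mem_Icc (by simpa using hℓ)
    rw [← exp_nat_mul, ← exp_add, exp_le_exp]
    nlinarith
  calc ∑ ℓ ∈ Finset.Icc 1 s, exp (a * n ℓ)
      ≤ ∑ ℓ ∈ Finset.Icc 1 s, exp (a * (n 1 - 1)) * exp a ^ ℓ := Finset.sum_le_sum hterm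
    _ = exp (a * (n 1 - 1)) * ∑ ℓ ∈ Finset.Ico 1 (s + 1), exp a ^ ℓ := by
      rw [Finset.mul_sum, Finset.Ico_add_one_right_eq_Icc]
    _ ≤ exp (a * (n 1 - 1)) * (exp a ^ 1 / (1 - exp a)) := by
      gcongr
      exact geom_sum_Ico_le_of_lt_one (exp_pos a).le hr
    _ = exp (a * n 1) / (1 - exp a) := by
      rw [pow_one, ← mul_div_assoc, ← exp_add]
      ring_nf

lemma two_mul_exp_div_one_sub_exp_le {ε δ ρ ζ n₁ : ℝ} (hε : 0 < ε) (hδ : 0 < δ) (hρ : 0 < ρ)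
    (hρε : ρ * ε < 1) (hζ : 0 < ζ)
    (hn₁ : n₁ ≥ 2 * ρ * (1 / ε - ρ) * log (1 / (ζ * δ)))
    (hζbound : ζ ≤ 1 / δ * exp
      ((log (δ / 2) + log (1 - exp (-2 * ε ^ 2))) / (4 * ε * ρ * (1 - ρ * ε)))) :
    2 * exp (-2 * ε ^ 2 * n₁) / (1 - exp (-2 * ε ^ 2)) ≤ δ := by
  set A := log (δ / 2) + log (1 - exp (-2 * ε ^ 2))
  set B := 4 * ε * ρ * (1 - ρ * ε)
  have hB : 0 < B := by have := sub_pos.2 hρε; positivity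
  have hr : 0 < 1 - exp (-2 * ε ^ 2) := sub_pos.2 (exp_lt_one_iff.2 (by nlinarith))
  have hlog : log (ζ * δ) ≤ A / B := by
    rw [log_le_iff_le_exp (by positivity)]
    calc ζ * δ ≤ 1 / δ * exp (A / B) * δ := by gcongr
      _ = exp (A / B) := by field_simp
  have hA : -A ≤ B * log (1 / (ζ * δ)) := by
    rw [one_div, log_inv, mul_neg, neg_le_neg_iff, ← le_div_iff₀' hB]
    exact hlog
  have hn : B * log (1 / (ζ * δ)) ≤ 2 * ε ^ 2 * n₁ :=
    calc B * log (1 / (ζ * δ)) = 2 * ε ^ 2 * (2 * ρ * (1 / ε - ρ) * log (1 / (ζ * δ))) := by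
          field_simp; ring
      _ ≤ 2 * ε ^ 2 * n₁ := by gcongr
  rw [div_le_iff₀ hr]
  calc 2 * exp (-2 * ε ^ 2 * n₁) ≤ 2 * exp A := by gcongr; linarith
    _ = δ * (1 - exp (-2 * ε ^ 2)) := by
      rw [exp_add, exp_log (by positivity), exp_log hr]; ring

lemma one_div_four_add_div_log_nonpos {ε c x : ℝ} (hε : 0 < ε) (hc0 : 0 < c) (hc1 : c < 1)
    (hx : x ≥ 1 / (2 * ε ^ 2) * log (1 / c)) : 1 / 4 + ε ^ 2 * x / (2 * log c) ≤ 0 := by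
  have hlog : log c < 0 := log_neg hc0 hc1
  rw [one_div c, log_inv, ge_iff_le, div_mul_eq_mul_div, one_mul,
    div_le_iff₀ (by positivity)] at hx
  have : ε ^ 2 * x / (2 * log c) ≤ -(1 / 4) := by
    rw [div_le_iff_of_neg (by linarith)]
    linarith
  linarith

theorem stmt10_general {Ω : Type*} [MeasurableSpace Ω] (P : Measure Ω) [IsProbabilityMeasure P]
    (p ε δ ρ ζ : ℝ) (hp : p ∈ Set.Ioo (0 : ℝ) 1) (hε : ε ∈ Set.Ioo (0 : ℝ) 1)
    (hδ : δ ∈ Set.Ioo (0 : ℝ) 1) (hρ : ρ ∈ Set.Ioc (0 : ℝ) 1) (hρε : ρ * ε ≤ 1 / 4)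
    (hζ : 0 < ζ) (hζδ : ζ * δ < 1)
    (s : ℕ) (hs : 0 < s) (n : ℕ → ℕ)
    (hmono : StrictMonoOn n (Set.Icc 1 s))
    (hn1 : (n 1 : ℝ) ≥ 2 * ρ * (1 / ε - ρ) * Real.log (1 / (ζ * δ)))
    (hns : (n s : ℝ) ≥ 1 / (2 * ε ^ 2) * Real.log (1 / (ζ * δ)))
    (X : ℕ → Ω → ℝ) (hmeas : ∀ i, Measurable (X i))
    (hind : iIndepFun X P)
    (hber : ∀ i, P {ω | X i ω = 1} = ENNReal.ofReal p ∧
                 P {ω | X i ω = 0} = ENNReal.ofReal (1 - p))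
    (phat : ℕ → Ω → ℝ)
    (hphat : ∀ ℓ ω, phat ℓ ω = (∑ i ∈ Finset.range (n ℓ), X i ω) / (n ℓ))
    (D : ℕ → Ω → Prop)
    (hD : ∀ ℓ ω, D ℓ ω ↔
        (|phat ℓ ω - 1 / 2| - ρ * ε) ^ 2 ≥ 1 / 4 + ε ^ 2 * (n ℓ) / (2 * Real.log (ζ * δ)))
    (L : Ω → ℕ) (hL : ∀ ω, L ω = sInf {ℓ | ℓ ∈ Set.Icc 1 s ∧ D ℓ ω})
    (hζbound : ζ ≤ 1 / δ * Real.exp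
        ((Real.log (δ / 2) + Real.log (1 - Real.exp (-2 * ε ^ 2))) / (4 * ε * ρ * (1 - ρ * ε)))) :
    P {ω | |phat (L ω) ω - p| < ε} ≥ ENNReal.ofReal (1 - δ) := by
  have hζδ0 : 0 < ζ * δ := mul_pos hζ hδ.1
  have hstop : ∀ ω, L ω ∈ Set.Icc 1 s := fun ω => by
    have hDs : D s ω :=
      (hD s ω).2 ((one_div_four_add_div_log_nonpos hε.1 hζδ0 hζδ hns).trans (sq_nonneg _))
    have hne : {ℓ | ℓ ∈ Set.Icc 1 s ∧ D ℓ ω}.Nonempty := ⟨s, ⟨hs, le_rfl⟩, hDs⟩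
    rw [hL]
    exact (Nat.sInf_mem hne).1
  have hmiss : {ω | |phat (L ω) ω - p| < ε}ᶜ ⊆ ⋃ ℓ ∈ Finset.Icc 1 s, {ω | ε ≤ |phat ℓ ω - p|} :=
    fun ω hω => Set.mem_biUnion (by simpa using hstop ω) (not_lt.1 (Set.notMem_ofPred_iff.1 hω))
  have hsum : ∑ ℓ ∈ Finset.Icc 1 s, 2 * exp (-2 * ε ^ 2 * n ℓ) ≤ δ :=
    calc ∑ ℓ ∈ Finset.Icc 1 s, 2 * exp (-2 * ε ^ 2 * n ℓ)
        = 2 * ∑ ℓ ∈ Finset.Icc 1 s, exp (-2 * ε ^ 2 * n ℓ) := (Finset.mul_sum ..).symm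
      _ ≤ 2 * (exp (-2 * ε ^ 2 * n 1) / (1 - exp (-2 * ε ^ 2))) := by
        gcongr
        exact sum_exp_mul_le_of_strictMonoOn hmono (by nlinarith [hε.1])
      _ ≤ δ := by
        rw [← mul_div_assoc]
        exact two_mul_exp_div_one_sub_exp_le hε.1 hδ.1 hρ.1 (by linarith) hζ hn1 hζbound
  refine ofReal_one_sub_le_of_measure_compl_le hδ.1.le ?_
  calc P {ω | |phat (L ω) ω - p| < ε}ᶜ
      ≤ ∑ ℓ ∈ Finset.Icc 1 s, P {ω | ε ≤ |phat ℓ ω - p|} :=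
        (measure_mono hmiss).trans (measure_biUnion_finset_le _ _)
    _ ≤ ∑ ℓ ∈ Finset.Icc 1 s, ENNReal.ofReal (2 * exp (-2 * ε ^ 2 * n ℓ)) := by
      gcongr with ℓ
      simp_rw [hphat]
      exact measure_le_abs_sampleMean_sub_le_of_bernoulli hp.1.le hp.2.le hmeas hind hber
        hε.1.le (n ℓ)
    _ = ENNReal.ofReal (∑ ℓ ∈ Finset.Icc 1 s, 2 * exp (-2 * ε ^ 2 * n ℓ)) :=
      (ENNReal.ofReal_sum_of_nonneg fun _ _ => by positivity).symm
    _ ≤ ENNReal.ofReal δ := ENNReal.ofReal_le_ofReal hsum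

theorem stmt10 {Ω : Type*} [MeasurableSpace Ω] (P : Measure Ω) [IsProbabilityMeasure P]
    (p ε δ ρ ζ : ℝ) (hp : p ∈ Set.Ioo (0 : ℝ) 1) (hε : ε ∈ Set.Ioo (0 : ℝ) 1)
    (hδ : δ ∈ Set.Ioo (0 : ℝ) 1) (hρ : ρ ∈ Set.Ioc (0 : ℝ) 1) (hρε : ρ * ε ≤ 1 / 4)
    (hζ : 0 < ζ) (hζδ : ζ * δ < 1)
    (s : ℕ) (hs : 0 < s) (n : ℕ → ℕ)
    (hmono : StrictMonoOn n (Set.Icc 1 s)) (hpos : ∀ ℓ, 0 < n ℓ)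
    (hn1 : (n 1 : ℝ) ≥ 2 * ρ * (1 / ε - ρ) * Real.log (1 / (ζ * δ)))
    (hns : (n s : ℝ) ≥ 1 / (2 * ε ^ 2) * Real.log (1 / (ζ * δ)))
    (X : ℕ → Ω → ℝ) (hmeas : ∀ i, Measurable (X i))
    (hind : iIndepFun X P)
    (hber : ∀ i, P {ω | X i ω = 1} = ENNReal.ofReal p ∧
                 P {ω | X i ω = 0} = ENNReal.ofReal (1 - p))
    (phat : ℕ → Ω → ℝ)
    (hphat : ∀ ℓ ω, phat ℓ ω = (∑ i ∈ Finset.range (n ℓ), X i ω) / (n ℓ))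
    (D : ℕ → Ω → Prop)
    (hD : ∀ ℓ ω, D ℓ ω ↔
        (|phat ℓ ω - 1 / 2| - ρ * ε) ^ 2 ≥ 1 / 4 + ε ^ 2 * (n ℓ) / (2 * Real.log (ζ * δ)))
    (L : Ω → ℕ) (hL : ∀ ω, L ω = sInf {ℓ | ℓ ∈ Set.Icc 1 s ∧ D ℓ ω})
    (hζbound : ζ ≤ 1 / δ * Real.exp
        ((Real.log (δ / 2) + Real.log (1 - Real.exp (-2 * ε ^ 2))) / (4 * ε * ρ * (1 - ρ * ε)))) :
    P {ω | |phat (L ω) ω - p| < ε} ≥ ENNReal.ofReal (1 - δ) :=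
  stmt10_general P p ε δ ρ ζ hp hε hδ hρ hρε hζ hζδ s hs n hmono hn1 hns X hmeas hind hber phat
    hphat D hD L hL hζbound
end

section
/- Under the double-parabolic sampling scheme with p ∈ (0,1/2], let a_ℓ = 1/2 - ρε - sqrt(1/4 + ε²n_ℓ/(2 ln(ζδ))) and let τ be the stage index such that a_{τ-1} ≤ p < a_τ. Then the expected sample number satisfies E[𝐧] ≤ n_τ + ∑_{ℓ=τ}^{s-1} (n_{ℓ+1} - n_ℓ) exp(n_ℓ M(a_ℓ, p)), where M is the Bernoulli KL-type function M(z,θ) = z ln(θ/z) + (1-z) ln((1-θ)/(1-z)). -/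
/-!
Stage `ℓ < s` is passed only if the stopping test fails there, which forces the sample mean
above the threshold `a ℓ`; since `a` increases with the stage and `p < a τ`, a Chernoff bound
gives `Pr{𝐥 > ℓ} ≤ exp (n ℓ M(a ℓ, p))` for `τ ≤ ℓ < s`. Bounding `n 𝐥` pointwise by
`n τ` plus the increments `n (ℓ + 1) - n ℓ` of the stages passed after `τ` and integrating
yields the estimate.
-/

open MeasureTheory ProbabilityTheory Finset Real

/-- The exponent `M(z, θ) = -KL(Bernoulli z ‖ Bernoulli θ)` of the Chernoff bound. -/
noncomputable def bernoulliChernoffExponent (z θ : ℝ) : ℝ :=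
  z * log (θ / z) + (1 - z) * log ((1 - θ) / (1 - z))

/-- `t = log (b (1 - p) / (p (1 - b)))` is the optimal tilt in Chernoff's bound at level `b`. -/
lemma exp_neg_mul_mul_mgf_eq_exp_bernoulliChernoffExponent {p b : ℝ} (hp : 0 < p)
    (hpb : p < b) (hb : b < 1) :
    exp (-log (b * (1 - p) / (p * (1 - b))) * b) *
        (p * exp (log (b * (1 - p) / (p * (1 - b)))) + (1 - p)) =
      exp (bernoulliChernoffExponent b p) := by
  have hb0 : 0 < b := hp.trans hpb
  have h1b : 0 < 1 - b := by linarith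
  have h1p : 0 < 1 - p := by linarith
  have hmgf : p * exp (log (b * (1 - p) / (p * (1 - b)))) + (1 - p) = (1 - p) / (1 - b) := by
    rw [exp_log (by positivity)]
    field_simp
    ring
  rw [hmgf, ← exp_log (show 0 < (1 - p) / (1 - b) by positivity), ← exp_add,
    bernoulliChernoffExponent]
  congr 1
  rw [log_div (by positivity) (by positivity), log_mul hb0.ne' h1p.ne', log_mul hp.ne' h1b.ne',
    log_div hp.ne' hb0.ne', log_div h1p.ne' h1b.ne']
  ring

section Bernoulli

variable {Ω : Type*} [MeasurableSpace Ω] {P : Measure Ω} [IsProbabilityMeasure P]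
  {Y : Ω → ℝ} {p : ℝ}

lemma ae_eq_one_or_eq_zero_of_bernoulli (hY : Measurable Y) (hp0 : 0 ≤ p) (hp1 : p ≤ 1)
    (h1 : P {ω | Y ω = 1} = ENNReal.ofReal p) (h0 : P {ω | Y ω = 0} = ENNReal.ofReal (1 - p)) :
    ∀ᵐ ω ∂P, Y ω = 1 ∨ Y ω = 0 := by
  have hA : MeasurableSet {ω | Y ω = 1} := hY (measurableSet_singleton 1)
  have hB : MeasurableSet {ω | Y ω = 0} := hY (measurableSet_singleton 0)
  have hdisj : Disjoint {ω | Y ω = 1} {ω | Y ω = 0} :=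
    Set.disjoint_left.2 fun ω h1 h0 => one_ne_zero (h1.symm.trans h0)
  have hunion : P ({ω | Y ω = 1} ∪ {ω | Y ω = 0}) = 1 := by
    rw [measure_union hdisj hB, h1, h0, ← ENNReal.ofReal_add hp0 (by linarith)]
    simp
  exact measure_mono_null (fun ω hω => hω)
    ((prob_compl_eq_zero_iff (hA.union hB)).2 hunion)

lemma exp_mul_ae_eq_of_bernoulli (hY : Measurable Y) (hp0 : 0 ≤ p) (hp1 : p ≤ 1)
    (h1 : P {ω | Y ω = 1} = ENNReal.ofReal p) (h0 : P {ω | Y ω = 0} = ENNReal.ofReal (1 - p))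
    (t : ℝ) :
    (fun ω => exp (t * Y ω)) =ᵐ[P] fun ω =>
      {ω | Y ω = 1}.indicator (fun _ => exp t) ω + {ω | Y ω = 0}.indicator (fun _ => 1) ω := by
  filter_upwards [ae_eq_one_or_eq_zero_of_bernoulli hY hp0 hp1 h1 h0] with ω hω
  rcases hω with hω | hω <;> simp [Set.indicator, hω]

lemma integrable_exp_mul_of_bernoulli (hY : Measurable Y) (hp0 : 0 ≤ p) (hp1 : p ≤ 1)
    (h1 : P {ω | Y ω = 1} = ENNReal.ofReal p) (h0 : P {ω | Y ω = 0} = ENNReal.ofReal (1 - p))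
    (t : ℝ) : Integrable (fun ω => exp (t * Y ω)) P :=
  (((integrable_const _).indicator (hY (measurableSet_singleton 1))).add
    ((integrable_const _).indicator (hY (measurableSet_singleton 0)))).congr
    (exp_mul_ae_eq_of_bernoulli hY hp0 hp1 h1 h0 t).symm

lemma mgf_eq_of_bernoulli (hY : Measurable Y) (hp0 : 0 ≤ p) (hp1 : p ≤ 1)
    (h1 : P {ω | Y ω = 1} = ENNReal.ofReal p) (h0 : P {ω | Y ω = 0} = ENNReal.ofReal (1 - p))
    (t : ℝ) : mgf Y P t = p * exp t + (1 - p) := by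
  have hA : MeasurableSet {ω | Y ω = 1} := hY (measurableSet_singleton 1)
  have hB : MeasurableSet {ω | Y ω = 0} := hY (measurableSet_singleton 0)
  rw [mgf, integral_congr_ae (exp_mul_ae_eq_of_bernoulli hY hp0 hp1 h1 h0 t),
    integral_add ((integrable_const _).indicator hA) ((integrable_const _).indicator hB),
    integral_indicator_const _ hA, integral_indicator_const _ hB, measureReal_def,
    measureReal_def, h1, h0, ENNReal.toReal_ofReal hp0, ENNReal.toReal_ofReal (by linarith)]
  simp [mul_comm]

lemma measureReal_le_sum_le_exp_bernoulliChernoffExponent {X : ℕ → Ω → ℝ}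
    (hmeas : ∀ i, Measurable (X i)) (hind : iIndepFun X P) (hp0 : 0 < p)
    (hber : ∀ i, P {ω | X i ω = 1} = ENNReal.ofReal p ∧
      P {ω | X i ω = 0} = ENNReal.ofReal (1 - p))
    (m : ℕ) {b : ℝ} (hpb : p < b) (hb1 : b < 1) :
    P.real {ω | m * b ≤ ∑ i ∈ range m, X i ω} ≤ exp (m * bernoulliChernoffExponent b p) := by
  set t := log (b * (1 - p) / (p * (1 - b)))
  have hp1 : p ≤ 1 := by linarith
  have ht : 0 ≤ t := by
    apply log_nonneg
    rw [le_div_iff₀ (by nlinarith)]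
    nlinarith
  have hint : Integrable (fun ω => exp (t * (∑ i ∈ range m, X i) ω)) P :=
    hind.integrable_exp_mul_sum hmeas fun i _ =>
      integrable_exp_mul_of_bernoulli (hmeas i) hp0.le hp1 (hber i).1 (hber i).2 t
  have hmgf : mgf (∑ i ∈ range m, X i) P t = (p * exp t + (1 - p)) ^ m := by
    rw [hind.mgf_sum hmeas, prod_congr rfl fun i _ =>
      mgf_eq_of_bernoulli (hmeas i) hp0.le hp1 (hber i).1 (hber i).2 t, prod_const, card_range]
  calc P.real {ω | m * b ≤ ∑ i ∈ range m, X i ω}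
      ≤ exp (-t * (m * b)) * mgf (∑ i ∈ range m, X i) P t := by
        simpa only [Finset.sum_apply] using measure_ge_le_exp_mul_mgf (m * b : ℝ) ht hint
    _ = (exp (-t * b) * (p * exp t + (1 - p))) ^ m := by
        rw [hmgf, mul_pow, ← exp_nat_mul]
        ring_nf
    _ = exp (m * bernoulliChernoffExponent b p) := by
        rw [exp_neg_mul_mul_mgf_eq_exp_bernoulliChernoffExponent hp0 hpb hb1, ← exp_nat_mul]

lemma measureReal_lt_sampleMean_le_exp_bernoulliChernoffExponent {X : ℕ → Ω → ℝ}
    (hmeas : ∀ i, Measurable (X i)) (hind : iIndepFun X P) (hp0 : 0 < p)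
    (hber : ∀ i, P {ω | X i ω = 1} = ENNReal.ofReal p ∧
      P {ω | X i ω = 0} = ENNReal.ofReal (1 - p))
    {m : ℕ} (hm : 0 < m) {b : ℝ} (hpb : p < b) (hb1 : b < 1) :
    P.real {ω | b < (∑ i ∈ range m, X i ω) / m} ≤ exp (m * bernoulliChernoffExponent b p) := by
  refine (measureReal_mono fun ω (hω : b < (∑ i ∈ range m, X i ω) / m) => ?_).trans
    (measureReal_le_sum_le_exp_bernoulliChernoffExponent hmeas hind hp0 hber m hpb hb1)
  rw [lt_div_iff₀ (Nat.cast_pos.2 hm)] at hω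
  show (m : ℝ) * b ≤ _
  linarith

end Bernoulli

lemma sub_nonneg_of_monotoneOn_Icc {f : ℕ → ℝ} {s ℓ : ℕ} (hf : MonotoneOn f (Set.Icc 1 s))
    (hℓ : 1 ≤ ℓ) (hℓs : ℓ < s) : 0 ≤ f (ℓ + 1) - f ℓ :=
  sub_nonneg.2 (hf ⟨hℓ, hℓs.le⟩ ⟨by omega, hℓs⟩ ℓ.le_succ)

lemma le_add_sum_Ico_sub_of_monotoneOn {f : ℕ → ℝ} {s τ k : ℕ}
    (hf : MonotoneOn f (Set.Icc 1 s)) (hτ : τ ∈ Set.Icc 1 s) (hk : k ∈ Set.Icc 1 s) :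
    f k ≤ f τ + ∑ ℓ ∈ Ico τ k, (f (ℓ + 1) - f ℓ) := by
  rcases le_total τ k with hτk | hkτ
  · rw [sum_Ico_sub f hτk]
    linarith
  · rw [Ico_eq_empty_of_le hkτ, sum_empty, add_zero]
    exact hf hk hτ hkτ

lemma integral_comp_le_add_sum_mul_measureReal {Ω : Type*} [MeasurableSpace Ω]
    {P : Measure Ω} [IsProbabilityMeasure P] {f : ℕ → ℝ} {s τ : ℕ} (hf0 : ∀ k, 0 ≤ f k)
    (hf : MonotoneOn f (Set.Icc 1 s)) (hτ : τ ∈ Set.Icc 1 s) {L : Ω → ℕ}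
    (hL : ∀ ω, L ω ∈ Set.Icc 1 s) {B : ℕ → Set Ω} (hB : ∀ ℓ, MeasurableSet (B ℓ))
    (hLB : ∀ ℓ ∈ Ico τ s, {ω | ℓ < L ω} ⊆ B ℓ) :
    ∫ ω, f (L ω) ∂P ≤ f τ + ∑ ℓ ∈ Ico τ s, (f (ℓ + 1) - f ℓ) * P.real (B ℓ) := by
  set g : Ω → ℝ := fun ω => f τ + ∑ ℓ ∈ Ico τ s, (B ℓ).indicator (fun _ => f (ℓ + 1) - f ℓ) ω
  have hinc : ∀ ℓ ∈ Ico τ s, 0 ≤ f (ℓ + 1) - f ℓ := fun ℓ hℓ =>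
    sub_nonneg_of_monotoneOn_Icc hf (hτ.1.trans (mem_Ico.1 hℓ).1) (mem_Ico.1 hℓ).2
  have hint : ∀ ℓ ∈ Ico τ s,
      Integrable (fun ω => (B ℓ).indicator (fun _ => f (ℓ + 1) - f ℓ) ω) P :=
    fun ℓ _ => (integrable_const _).indicator (hB ℓ)
  have hle : ∀ ω, f (L ω) ≤ g ω := fun ω => by
    refine (le_add_sum_Ico_sub_of_monotoneOn hf hτ (hL ω)).trans (add_le_add le_rfl ?_)
    calc ∑ ℓ ∈ Ico τ (L ω), (f (ℓ + 1) - f ℓ)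
        = ∑ ℓ ∈ Ico τ (L ω), (B ℓ).indicator (fun _ => f (ℓ + 1) - f ℓ) ω :=
          sum_congr rfl fun ℓ hℓ => (Set.indicator_of_mem (f := fun _ => f (ℓ + 1) - f ℓ)
            (hLB ℓ (mem_Ico.2 ⟨(mem_Ico.1 hℓ).1, (mem_Ico.1 hℓ).2.trans_le (hL ω).2⟩)
              (mem_Ico.1 hℓ).2)).symm
      _ ≤ ∑ ℓ ∈ Ico τ s, (B ℓ).indicator (fun _ => f (ℓ + 1) - f ℓ) ω :=
          sum_le_sum_of_subset_of_nonneg (Ico_subset_Ico_right (hL ω).2) fun ℓ hℓ _ =>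
            Set.indicator_nonneg (fun _ _ => hinc ℓ hℓ) ω
  calc ∫ ω, f (L ω) ∂P ≤ ∫ ω, g ω ∂P :=
        integral_mono_of_nonneg (.of_forall fun ω => hf0 _)
          ((integrable_const _).add (integrable_finsetSum _ hint)) (.of_forall hle)
    _ = f τ + ∑ ℓ ∈ Ico τ s, (f (ℓ + 1) - f ℓ) * P.real (B ℓ) := by
        rw [integral_add (integrable_const _) (integrable_finsetSum _ hint),
          integral_finsetSum _ hint, integral_const, probReal_univ, one_smul]
        congr 1
        exact sum_congr rfl fun ℓ _ => by rw [integral_indicator_const _ (hB ℓ), smul_eq_mul, mul_comm]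

lemma sub_sub_sqrt_lt_of_sq_abs_sub_sub_lt {x c r q : ℝ} (h : (|x - c| - r) ^ 2 < q) :
    c - r - √q < x := by
  have hlt : |x - c| - r < √q :=
    calc |x - c| - r ≤ |(|x - c| - r)| := le_abs_self _
      _ = √((|x - c| - r) ^ 2) := (sqrt_sq_eq_abs _).symm
      _ < √q := sqrt_lt_sqrt (sq_nonneg _) h
  linarith [neg_abs_le (x - c)]

lemma sub_sqrt_add_sq_mul_div_le {c q e d m m' : ℝ} (hd : d < 0) (hm : m ≤ m') :
    c - √(q + e ^ 2 * m / d) ≤ c - √(q + e ^ 2 * m' / d) := by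
  have : e ^ 2 * m' / d ≤ e ^ 2 * m / d := div_le_div_of_nonpos_of_le hd.le (by gcongr)
  have : √(q + e ^ 2 * m' / d) ≤ √(q + e ^ 2 * m / d) := by gcongr
  linarith

lemma not_of_lt_sInf_Icc {D : ℕ → Prop} {s ℓ : ℕ} (hℓ : 1 ≤ ℓ) (hℓs : ℓ ≤ s)
    (hlt : ℓ < sInf {k | k ∈ Set.Icc 1 s ∧ D k}) : ¬ D ℓ := fun hD =>
  Nat.notMem_of_lt_sInf hlt ⟨⟨hℓ, hℓs⟩, hD⟩

theorem stmt15_general {Ω : Type*} [MeasurableSpace Ω] (P : Measure Ω) [IsProbabilityMeasure P]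
    (p ε δ ρ ζ : ℝ) (hp : p ∈ Set.Ioc (0 : ℝ) (1 / 2)) (hε : 0 < ε)
    (hρ : ρ ∈ Set.Ioc (0 : ℝ) 1) (hζδ : 0 < ζ * δ) (hζδ1 : ζ * δ < 1)
    (s : ℕ) (n : ℕ → ℕ)
    (hmono : StrictMonoOn n (Set.Icc 1 s)) (hpos : ∀ ℓ, 0 < n ℓ)
    (X : ℕ → Ω → ℝ) (hmeas : ∀ i, Measurable (X i))
    (hind : iIndepFun X P)
    (hber : ∀ i, P {ω | X i ω = 1} = ENNReal.ofReal p ∧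
                 P {ω | X i ω = 0} = ENNReal.ofReal (1 - p))
    (phat : ℕ → Ω → ℝ)
    (hphat : ∀ ℓ ω, phat ℓ ω = (∑ i ∈ Finset.range (n ℓ), X i ω) / (n ℓ))
    (D : ℕ → Ω → Prop)
    (hD : ∀ ℓ ω, D ℓ ω ↔
        (|phat ℓ ω - 1 / 2| - ρ * ε) ^ 2 ≥ 1 / 4 + ε ^ 2 * (n ℓ) / (2 * Real.log (ζ * δ)))
    (hterm : ∀ ω, ∃ ℓ ∈ Set.Icc 1 s, D ℓ ω)
    (L : Ω → ℕ) (hL : ∀ ω, L ω = sInf {ℓ | ℓ ∈ Set.Icc 1 s ∧ D ℓ ω})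
    (a : ℕ → ℝ)
    (ha : ∀ j, a j = 1 / 2 - ρ * ε - Real.sqrt (1 / 4 + ε ^ 2 * (n j) / (2 * Real.log (ζ * δ))))
    (τ : ℕ) (hτ1 : 1 ≤ τ) (hτs : τ ≤ s) (hτb : p < a τ) :
    ∫ ω, (n (L ω) : ℝ) ∂P ≤
      (n τ : ℝ) + ∑ ℓ ∈ Finset.Ico τ s, ((n (ℓ + 1) : ℝ) - (n ℓ : ℝ)) *
        Real.exp ((n ℓ) *
          (a ℓ * Real.log (p / a ℓ) + (1 - a ℓ) * Real.log ((1 - p) / (1 - a ℓ)))) := by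
  have hlog : 2 * log (ζ * δ) < 0 := by linarith [log_neg hζδ hζδ1]
  have hn : MonotoneOn (fun k => (n k : ℝ)) (Set.Icc 1 s) := fun i hi j hj hij =>
    Nat.cast_le.2 (hmono.monotoneOn hi hj hij)
  have hL_mem : ∀ ω, L ω ∈ Set.Icc 1 s := fun ω => by
    obtain ⟨ℓ, hℓ, hDℓ⟩ := hterm ω
    exact (hL ω ▸ Nat.sInf_mem (s := {ℓ | ℓ ∈ Set.Icc 1 s ∧ D ℓ ω}) ⟨ℓ, hℓ, hDℓ⟩).1
  have hpassed : ∀ ℓ ∈ Ico τ s, {ω | ℓ < L ω} ⊆ {ω | a ℓ < phat ℓ ω} := by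
    intro ℓ hℓ ω (hω : ℓ < L ω)
    have hnD := not_of_lt_sInf_Icc (by grind) (by grind) (hL ω ▸ hω)
    rw [hD, ge_iff_le, not_le] at hnD
    exact (ha ℓ).symm ▸ sub_sub_sqrt_lt_of_sq_abs_sub_sub_lt hnD
  have htail : ∀ ℓ ∈ Ico τ s, P.real {ω | a ℓ < phat ℓ ω} ≤
      exp (n ℓ * bernoulliChernoffExponent (a ℓ) p) := by
    intro ℓ hℓ
    have hpa : p < a ℓ := hτb.trans_le <| by
      rw [ha, ha]
      exact sub_sqrt_add_sq_mul_div_le hlog (hn ⟨hτ1, hτs⟩ ⟨by grind, by grind⟩ (mem_Ico.1 hℓ).1)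
    have ha1 : a ℓ < 1 := by
      rw [ha]
      linarith [sqrt_nonneg (1 / 4 + ε ^ 2 * n ℓ / (2 * log (ζ * δ))), mul_pos hρ.1 hε]
    simpa only [hphat] using measureReal_lt_sampleMean_le_exp_bernoulliChernoffExponent
      hmeas hind hp.1 hber (hpos ℓ) hpa ha1
  have hphat_meas : ∀ ℓ, Measurable (phat ℓ) := fun ℓ => by
    rw [funext (hphat ℓ)]
    fun_prop
  calc ∫ ω, (n (L ω) : ℝ) ∂P
      ≤ n τ + ∑ ℓ ∈ Ico τ s, ((n (ℓ + 1) : ℝ) - n ℓ) * P.real {ω | a ℓ < phat ℓ ω} :=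
        integral_comp_le_add_sum_mul_measureReal (fun k => (n k).cast_nonneg) hn ⟨hτ1, hτs⟩
          hL_mem (fun ℓ => measurableSet_lt measurable_const (hphat_meas ℓ)) hpassed
    _ ≤ _ := by
        gcongr with ℓ hℓ
        · exact sub_nonneg_of_monotoneOn_Icc hn (hτ1.trans (mem_Ico.1 hℓ).1) (mem_Ico.1 hℓ).2
        · exact htail ℓ hℓ

theorem stmt15 {Ω : Type*} [MeasurableSpace Ω] (P : Measure Ω) [IsProbabilityMeasure P]
    (p ε δ ρ ζ : ℝ) (hp : p ∈ Set.Ioc (0 : ℝ) (1 / 2)) (hε : 0 < ε)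
    (hρ : ρ ∈ Set.Ioc (0 : ℝ) 1) (hζδ : 0 < ζ * δ) (hζδ1 : ζ * δ < 1)
    (s : ℕ) (hs : 0 < s) (n : ℕ → ℕ)
    (hmono : StrictMonoOn n (Set.Icc 1 s)) (hpos : ∀ ℓ, 0 < n ℓ)
    (X : ℕ → Ω → ℝ) (hmeas : ∀ i, Measurable (X i))
    (hind : iIndepFun X P)
    (hber : ∀ i, P {ω | X i ω = 1} = ENNReal.ofReal p ∧
                 P {ω | X i ω = 0} = ENNReal.ofReal (1 - p))
    (phat : ℕ → Ω → ℝ)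
    (hphat : ∀ ℓ ω, phat ℓ ω = (∑ i ∈ Finset.range (n ℓ), X i ω) / (n ℓ))
    (D : ℕ → Ω → Prop)
    (hD : ∀ ℓ ω, D ℓ ω ↔
        (|phat ℓ ω - 1 / 2| - ρ * ε) ^ 2 ≥ 1 / 4 + ε ^ 2 * (n ℓ) / (2 * Real.log (ζ * δ)))
    (hterm : ∀ ω, ∃ ℓ ∈ Set.Icc 1 s, D ℓ ω)
    (L : Ω → ℕ) (hL : ∀ ω, L ω = sInf {ℓ | ℓ ∈ Set.Icc 1 s ∧ D ℓ ω})
    (a : ℕ → ℝ)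
    (ha : ∀ j, a j = 1 / 2 - ρ * ε - Real.sqrt (1 / 4 + ε ^ 2 * (n j) / (2 * Real.log (ζ * δ))))
    (hnneg : ∀ j < s, 0 ≤ 1 / 4 + ε ^ 2 * (n j) / (2 * Real.log (ζ * δ)))
    (τ : ℕ) (hτ1 : 1 ≤ τ) (hτs : τ ≤ s) (hτa : a (τ - 1) ≤ p) (hτb : p < a τ) :
    ∫ ω, (n (L ω) : ℝ) ∂P ≤
      (n τ : ℝ) + ∑ ℓ ∈ Finset.Ico τ s, ((n (ℓ + 1) : ℝ) - (n ℓ : ℝ)) *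
        Real.exp ((n ℓ) *
          (a ℓ * Real.log (p / a ℓ) + (1 - a ℓ) * Real.log ((1 - p) / (1 - a ℓ)))) :=
  stmt15_general P p ε δ ρ ζ hp hε hρ hζδ hζδ1 s n hmono hpos X hmeas hind hber phat hphat D hD
    hterm L hL a ha τ hτ1 hτs hτb
end
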